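/- If U is a regular subsemigroup of a left-stable semigroup S, then U is left-stable. -/

import Mathlib

/-- `x ≤_R y` in a semigroup: `x ∈ yS¹`. -/
def leR {S : Type*} [Semigroup S] (x y : S) : Prop := x = y ∨ ∃ t, x = y * t

/-- `x ≤_L y` in a semigroup: `x ∈ S¹y`. -/
def leL {S : Type*} [Semigroup S] (x y : S) : Prop := x = y ∨ ∃ t, x = t * y

/-- `x ≤_J y` in a semigroup: `x ∈ S¹yS¹`. -/
def leJ {S : Type*} [Semigroup S] (x y : S) : Prop :=
  x = y ∨ (∃ t, x = y * t) ∨ (∃ t, x = t * y) ∨ ∃ t u, x = t * y * u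

/-- Green's relation `R`: `xS¹ = yS¹`. -/
def GreenR {S : Type*} [Semigroup S] (x y : S) : Prop := leR x y ∧ leR y x

/-- Green's relation `L`: `S¹x = S¹y`. -/
def GreenL {S : Type*} [Semigroup S] (x y : S) : Prop := leL x y ∧ leL y x

/-- Green's relation `J`: `S¹xS¹ = S¹yS¹`. -/
def GreenJ {S : Type*} [Semigroup S] (x y : S) : Prop := leJ x y ∧ leJ y x

/-- Green's relation `H = R ∩ L`. -/
def GreenH {S : Type*} [Semigroup S] (x y : S) : Prop := GreenR x y ∧ GreenL x y

/-- Green's relation `D = R ∘ L`. -/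
def GreenD {S : Type*} [Semigroup S] (x y : S) : Prop := ∃ z, GreenR x z ∧ GreenL z y

theorem leJ.map {S T : Type*} [Semigroup S] [Semigroup T] (f : S →ₙ* T) {x y : S}
    (h : leJ x y) : leJ (f x) (f y) := by
  rcases h with rfl | ⟨t, rfl⟩ | ⟨t, rfl⟩ | ⟨t, u, rfl⟩
  · exact Or.inl rfl
  · exact Or.inr (Or.inl ⟨f t, map_mul f y t⟩)
  · exact Or.inr (Or.inr (Or.inl ⟨f t, map_mul f t y⟩))
  · exact Or.inr (Or.inr (Or.inr ⟨f t, f u, by rw [map_mul, map_mul]⟩))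

theorem GreenJ.map {S T : Type*} [Semigroup S] [Semigroup T] (f : S →ₙ* T) {x y : S}
    (h : GreenJ x y) : GreenJ (f x) (f y) :=
  ⟨h.1.map f, h.2.map f⟩

/-- Regularity of `b` turns `x = s * b`, with `s` outside the image of `f`, into
`x = (x * z) * b`. -/
theorem leL.of_map_of_eq_mul_mul {S T : Type*} [Semigroup S] [Semigroup T] {f : S →ₙ* T}
    (hf : Function.Injective f) {x b z : S} (hb : b = b * z * b) (h : leL (f x) (f b)) :
    leL x b := by
  rcases h with h | ⟨s, h⟩
  · exact Or.inl (hf h)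
  · refine Or.inr ⟨x * z, hf ?_⟩
    calc f x = s * f (b * z * b) := by rw [← hb, h]
      _ = f x * f z * f b := by rw [map_mul, map_mul, h, mul_assoc, mul_assoc, mul_assoc]
      _ = f (x * z * b) := by rw [map_mul, map_mul]

/-- If `U` is a regular subsemigroup of a left-stable semigroup `S`, then `U`
is left-stable. -/
theorem stmt_10 {S : Type*} [Semigroup S] (U : Subsemigroup S)
    (hreg : ∀ y : U, ∃ z : U, y = y * z * y)
    (hls : ∀ x y : S, GreenJ x (y * x) → GreenL x (y * x)) :
    ∀ x y : U, GreenJ x (y * x) → GreenL x (y * x) := by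
  intro x y hJ
  obtain ⟨z, hz⟩ := hreg (y * x)
  have hL : GreenL (x : S) (y * x) := hls x y (hJ.map (MulMemClass.subtype U))
  exact ⟨hL.1.of_map_of_eq_mul_mul (MulMemClass.subtype_injective U) hz, Or.inr ⟨y, rfl⟩⟩
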